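/- Elliptical potential lemma (per-arm version): Let x_1, …, x_n ∈ ℝ^d with ‖x_s‖₂ ≤ 1, V_0 = I, V_s = V_{s-1} + x_s x_s^T. Then ∑_{s=1}^n min{1, x_s^T V_{s-1}^{-1} x_s} ≤ 2 d log((d + n)/d). -/

import Mathlib

/-!
Each rank-one update multiplies the determinant by `1 + xᵀ V⁻¹ x` (matrix determinant lemma), and
`min 1 u ≤ 2 log (1 + u)`, so the sum telescopes to at most `2 log det V_n`. AM–GM on the
eigenvalues gives `det V_n ≤ (tr V_n / d) ^ d`, and `tr V_n ≤ d + n` because each update adds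
`‖x_s‖² ≤ 1` to the trace.
-/
open Matrix Finset

theorem Real.prod_le_arith_mean_pow {ι : Type*} (s : Finset ι) (z : ι → ℝ)
    (hz : ∀ i ∈ s, 0 ≤ z i) : ∏ i ∈ s, z i ≤ ((∑ i ∈ s, z i) / #s) ^ #s := by
  rcases s.eq_empty_or_nonempty with rfl | hs
  · simp
  have h := Real.geom_mean_le_arith_mean s (fun _ => 1) z (fun _ _ => zero_le_one)
    (by simpa using hs) hz
  simp only [Real.rpow_one, one_mul, sum_const, nsmul_eq_mul, mul_one] at h
  calc ∏ i ∈ s, z i = ((∏ i ∈ s, z i) ^ (#s : ℝ)⁻¹) ^ #s := by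
        rw [← Real.rpow_natCast, ← Real.rpow_mul (prod_nonneg hz),
          inv_mul_cancel₀ (by positivity), Real.rpow_one]
    _ ≤ ((∑ i ∈ s, z i) / #s) ^ #s := by gcongr; exact Real.rpow_nonneg (prod_nonneg hz) _

theorem Real.min_one_le_two_mul_log_one_add {u : ℝ} (hu : 0 ≤ u) :
    min 1 u ≤ 2 * Real.log (1 + u) :=
  calc min 1 u ≤ 2 * (1 - (1 + u)⁻¹) := by
        rw [show 2 * (1 - (1 + u)⁻¹) = 2 * u / (1 + u) by field_simp; ring,
          le_div_iff₀ (by positivity)]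
        rcases le_total u 1 with h | h
        · rw [min_eq_right h]; nlinarith
        · rw [min_eq_left h]; linarith
    _ ≤ 2 * Real.log (1 + u) := by
        gcongr; exact Real.one_sub_inv_le_log_of_pos (by positivity)

namespace Matrix

variable {m : Type*} [Fintype m] [DecidableEq m]

theorem det_add_vecMulVec {α : Type*} [CommRing α] {A : Matrix m m α} (hA : IsUnit A.det)
    (u v : m → α) : (A + vecMulVec u v).det = A.det * (1 + v ⬝ᵥ A⁻¹ *ᵥ u) := by
  rw [vecMulVec_eq Unit, det_add_replicateCol_mul_replicateRow hA, Matrix.mul_assoc,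
    ← replicateCol_mulVec, det_one_add_mul_comm, det_one_add_replicateCol_mul_replicateRow]

theorem PosSemidef.det_le_trace_div_card_pow {A : Matrix m m ℝ} (hA : A.PosSemidef) :
    A.det ≤ (A.trace / Fintype.card m) ^ Fintype.card m := by
  rw [hA.isHermitian.det_eq_prod_eigenvalues, hA.isHermitian.trace_eq_sum_eigenvalues]
  simpa using Real.prod_le_arith_mean_pow univ _ fun i _ => hA.eigenvalues_nonneg i

theorem PosDef.log_det_add_vecMulVec_self {A : Matrix m m ℝ} (hA : A.PosDef) (x : m → ℝ) :
    Real.log (A + vecMulVec x x).det = Real.log A.det + Real.log (1 + x ⬝ᵥ A⁻¹ *ᵥ x) := by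
  have hq : 0 ≤ x ⬝ᵥ A⁻¹ *ᵥ x := by simpa using hA.inv.posSemidef.dotProduct_mulVec_nonneg x
  rw [det_add_vecMulVec (isUnit_iff_ne_zero.mpr hA.det_pos.ne'),
    Real.log_mul hA.det_pos.ne' (by positivity)]

end Matrix

section RankOneUpdates

variable {ι : Type*} [Fintype ι] {n : ℕ} {x : ℕ → ι → ℝ}
  {V : ℕ → Matrix ι ι ℝ}

theorem posDef_of_add_vecMulVec_self (h0 : (V 0).PosDef)
    (hV : ∀ s < n, V (s + 1) = V s + vecMulVec (x s) (x s)) : ∀ s ≤ n, (V s).PosDef := by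
  intro s hs
  induction s with
  | zero => exact h0
  | succ s ih =>
    rw [hV s hs]
    exact (ih (by omega)).add_posSemidef (by simpa using posSemidef_vecMulVec_self_star (x s))

theorem trace_le_of_add_vecMulVec_self (hx : ∀ s < n, x s ⬝ᵥ x s ≤ 1)
    (hV : ∀ s < n, V (s + 1) = V s + vecMulVec (x s) (x s)) :
    ∀ s ≤ n, (V s).trace ≤ (V 0).trace + s := by
  intro s hs
  induction s with
  | zero => simp
  | succ s ih =>
    rw [hV s hs, trace_add, trace_vecMulVec]
    push_cast
    linarith [ih (by omega), hx s hs]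

theorem sum_min_one_le_two_mul_log_det [DecidableEq ι] (h0 : (V 0).PosDef)
    (hV : ∀ s < n, V (s + 1) = V s + vecMulVec (x s) (x s)) :
    ∑ s ∈ range n, min 1 (x s ⬝ᵥ (V s)⁻¹ *ᵥ x s) ≤
      2 * (Real.log (V n).det - Real.log (V 0).det) := by
  have hPD := posDef_of_add_vecMulVec_self h0 hV
  rw [← sum_range_sub (fun s => Real.log (V s).det), mul_sum]
  refine sum_le_sum fun s hs => ?_
  have hs : s < n := mem_range.mp hs
  rw [hV s hs, (hPD s hs.le).log_det_add_vecMulVec_self, add_sub_cancel_left]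
  exact Real.min_one_le_two_mul_log_one_add
    (by simpa using (hPD s hs.le).inv.posSemidef.dotProduct_mulVec_nonneg (x s))

end RankOneUpdates

theorem stmt_12_general (d n : ℕ) (x : ℕ → Fin d → ℝ)
    (hx : ∀ s < n, (∑ i, (x s i) ^ 2) ≤ 1)
    (V : ℕ → Matrix (Fin d) (Fin d) ℝ)
    (hV0 : V 0 = 1)
    (hVs : ∀ s < n, V (s + 1) = V s + Matrix.vecMulVec (x s) (x s)) :
    (∑ s ∈ Finset.range n, min 1 (x s ⬝ᵥ ((V s)⁻¹ *ᵥ x s))) ≤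
      2 * d * Real.log ((d + n) / d) := by
  have h0 : (V 0).PosDef := hV0 ▸ PosDef.one
  have hVn := posDef_of_add_vecMulVec_self h0 hVs n le_rfl
  have htr : (V n).trace ≤ d + n := by
    simpa [hV0] using trace_le_of_add_vecMulVec_self
      (fun s hs => by simpa [dotProduct, sq] using hx s hs) hVs n le_rfl
  have hdet : (V n).det ≤ ((d + n) / d) ^ d :=
    calc (V n).det ≤ ((V n).trace / d) ^ d := by
          simpa using hVn.posSemidef.det_le_trace_div_card_pow
      _ ≤ ((d + n) / d) ^ d := by
          have := hVn.posSemidef.trace_nonneg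
          gcongr
  calc _ ≤ 2 * (Real.log (V n).det - Real.log (V 0).det) := sum_min_one_le_two_mul_log_det h0 hVs
    _ = 2 * Real.log (V n).det := by rw [hV0, det_one, Real.log_one, sub_zero]
    _ ≤ 2 * Real.log (((d + n) / d) ^ d) := by gcongr; exact hVn.det_pos
    _ = 2 * d * Real.log ((d + n) / d) := by rw [Real.log_pow]; ring

/-- elliptical potential lemma with identity regularization. -/
theorem stmt_12 (d n : ℕ) (hd : 0 < d) (x : ℕ → Fin d → ℝ)
    (hx : ∀ s < n, (∑ i, (x s i) ^ 2) ≤ 1)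
    (V : ℕ → Matrix (Fin d) (Fin d) ℝ)
    (hV0 : V 0 = 1)
    (hVs : ∀ s < n, V (s + 1) = V s + Matrix.vecMulVec (x s) (x s)) :
    (∑ s ∈ Finset.range n, min 1 (x s ⬝ᵥ ((V s)⁻¹ *ᵥ x s))) ≤
      2 * d * Real.log ((d + n) / d) :=
  stmt_12_general d n x hx V hV0 hVs
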